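/- Suppose M satisfies the conditions of one of the Cases 1–4 (Case 1: every [[a,b],[0,d]] ∈ M has a ≥ d, every [[a,0],[c,d]] ∈ M has a ≤ d, whenever [[a,b],[c,0]] ∈ M and [[0,b'],[c',d']] ∈ M one has bc' ≥ b'c, and no matrix in M has the form [[a,0],[0,d]] or [[0,b],[c,0]]; Case 2: every [[a,b],[0,d]] ∈ M has a < d, every [[a,0],[c,d]] ∈ M has a > d, and whenever [[a,b],[c,0]] ∈ M and [[0,b'],[c',d']] ∈ M one has bc' < b'c; Case 3: every [[a,b],[0,d]] ∈ M has a ≥ d, every [[a,0],[c,d]] ∈ M has a > d, and no matrix in M has top-left entry 0; Case 4: every [[a,b],[0,d]] ∈ M has a < d, every [[a,0],[c,d]] ∈ M has a ≤ d, and no matrix in M has bottom-right entry 0). Then for any two vectors V = (v₁,v₂) and W = (w₁,w₂) with positive entries and any ω ∈ S^ℕ, limₙ N(Pₙ(ω)V) = limₙ N(Pₙ(ω)W); that is, the uniform limit of ω ↦ N(Pₙ(ω)V) does not depend on the positive vector V. -/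

import Mathlib

/-!
Write `uₙ = 1 ᵥ* Pₙ` for the column sums of `Pₙ`. Then
`n(Pₙ V) - n(Pₙ W) = det Pₙ (v₁w₂ - v₂w₁) / ((uₙ ⬝ᵥ V)(uₙ ⬝ᵥ W))`.
If the two limits differed, this would stay away from `0`: then `det Pₙ` keeps its sign, so
eventually every factor has positive determinant, and `(uₙ₀ + uₙ₁)² ≤ C |det Pₙ|`, so the two
column sums stay comparable and `uₙ₀ uₙ₁ / |det Pₙ|` stays bounded. That quotient never
decreases and grows by a fixed factor at each occurrence of a recurring non-diagonal factor.
If instead the factors are eventually diagonal, the case hypotheses make `uₙ₀ / uₙ₁` (or its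
inverse) grow by a fixed factor infinitely often. Either way a bounded sequence is unbounded.
-/

open Matrix Filter

/-- A 2×2 real matrix is nonnegative and column-allowable. -/
def ColAllowable (A : Matrix (Fin 2) (Fin 2) ℝ) : Prop :=
  (∀ i j, 0 ≤ A i j) ∧ 0 < A 0 0 + A 1 0 ∧ 0 < A 0 1 + A 1 1

/-- `n(X) = x₁/(x₁+x₂)`. -/
noncomputable def nv (X : Fin 2 → ℝ) : ℝ := X 0 / (X 0 + X 1)

/-- The normalized vector `N(X)`. -/
noncomputable def Nv (X : Fin 2 → ℝ) : Fin 2 → ℝ := ![nv X, 1 - nv X]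

/-- `Pₙ(ω) = M_{ω₁} M_{ω₂} ⋯ M_{ωₙ}`. -/
def Pprod {s : ℕ} (M : Fin s → Matrix (Fin 2) (Fin 2) ℝ) (ω : ℕ → Fin s) (n : ℕ) :
    Matrix (Fin 2) (Fin 2) ℝ :=
  ((List.range n).map (fun i => M (ω i))).prod

theorem Filter.Frequently.exists_frequently_eq {α ι : Type*} [Finite ι] {l : Filter α}
    {f : α → ι} {p : ι → Prop} (h : ∃ᶠ x in l, p (f x)) : ∃ i, p i ∧ ∃ᶠ x in l, f x = i := by
  obtain ⟨i, hi⟩ := frequently_exists.mp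
    (h.mono fun x hx => (⟨f x, hx, rfl⟩ : ∃ i, p i ∧ f x = i))
  obtain ⟨-, hpi, -⟩ := hi.exists
  exact ⟨i, hpi, hi.mono fun _ => And.right⟩

theorem not_eventually_le_of_frequently_mul_le {f θ : ℕ → ℝ} {θ₀ : ℝ} (hθ₀ : 1 < θ₀)
    (hf : ∀ᶠ n in atTop, 0 < f n ∧ 1 ≤ θ n ∧ θ n * f n ≤ f (n + 1))
    (hjump : ∃ᶠ n in atTop, θ₀ ≤ θ n) (C : ℝ) : ¬ ∀ᶠ n in atTop, f n ≤ C := by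
  obtain ⟨N, hN⟩ := eventually_atTop.mp hf
  have hmono : ∀ m n, N ≤ m → m ≤ n → f m ≤ f n := by
    intro m n hm hmn
    induction n, hmn using Nat.le_induction with
    | base => exact le_rfl
    | succ n hmn ih =>
      obtain ⟨hpos, hθ, hstep⟩ := hN n (hm.trans hmn)
      nlinarith
  have hfN : 0 < f N := (hN N le_rfl).1
  have hgrow : ∀ j : ℕ, ∀ᶠ n in atTop, θ₀ ^ j * f N ≤ f n := by
    intro j
    induction j with
    | zero => exact eventually_atTop.mpr ⟨N, fun n hn => by simpa using hmono N n le_rfl hn⟩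
    | succ j ih =>
      obtain ⟨m, ⟨hm, hNm⟩, hθm⟩ := ((ih.and (eventually_ge_atTop N)).and_frequently hjump).exists
      obtain ⟨hpos, -, hstep⟩ := hN m hNm
      refine eventually_atTop.mpr ⟨m + 1, fun n hn => ?_⟩
      calc θ₀ ^ (j + 1) * f N = θ₀ * (θ₀ ^ j * f N) := by ring
        _ ≤ θ m * f m := mul_le_mul hθm hm (by positivity) (by linarith)
        _ ≤ f n := hstep.trans (hmono _ _ (by omega) hn)
  intro hC
  obtain ⟨j, hj⟩ := ((tendsto_pow_atTop_atTop_of_one_lt hθ₀).eventually_gt_atTop (C / f N)).exists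
  obtain ⟨n, hn, hCn⟩ := ((hgrow j).and hC).exists
  rw [div_lt_iff₀ hfN] at hj
  linarith

@[simp]
theorem one_vecMul_fin_two (P : Matrix (Fin 2) (Fin 2) ℝ) (j : Fin 2) :
    (1 ᵥ* P) j = P 0 j + P 1 j := by
  simp [vecMul, dotProduct, Fin.sum_univ_two]

theorem vecMul_apply_of_isDiag {n R : Type*} [Fintype n] [DecidableEq n]
    [NonUnitalNonAssocSemiring R] {A : Matrix n n R} (hA : A.IsDiag) (u : n → R) (j : n) :
    (u ᵥ* A) j = u j * A j j := by
  conv_lhs => rw [← hA.diagonal_diag]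
  rw [vecMul_diagonal, diag_apply]

theorem abs_det_le_one_vecMul_mul {P : Matrix (Fin 2) (Fin 2) ℝ} (hP : ∀ i j, 0 ≤ P i j) :
    |P.det| ≤ (1 ᵥ* P) 0 * (1 ᵥ* P) 1 := by
  rw [det_fin_two, abs_le, one_vecMul_fin_two, one_vecMul_fin_two]
  constructor <;> nlinarith [mul_nonneg (hP 0 0) (hP 0 1), mul_nonneg (hP 1 0) (hP 1 1),
    mul_nonneg (hP 0 0) (hP 1 1), mul_nonneg (hP 0 1) (hP 1 0)]

theorem diag_pos_of_det_pos {A : Matrix (Fin 2) (Fin 2) ℝ} (hA : ∀ i j, 0 ≤ A i j)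
    (hdet : 0 < A.det) (i : Fin 2) : 0 < A i i := by
  have h : 0 < A 0 0 * A 1 1 := by
    rw [det_fin_two] at hdet
    linarith [mul_nonneg (hA 0 1) (hA 1 0)]
  fin_cases i
  exacts [pos_of_mul_pos_left h (hA 1 1), pos_of_mul_pos_right h (hA 0 0)]

theorem isDiag_fin_two_iff {α : Type*} [Zero α] {A : Matrix (Fin 2) (Fin 2) α} :
    A.IsDiag ↔ A 0 1 = 0 ∧ A 1 0 = 0 :=
  ⟨fun h => ⟨h zero_ne_one, h one_ne_zero⟩, fun ⟨h01, h10⟩ i j hij => by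
    fin_cases i <;> fin_cases j <;> simp_all⟩

theorem mul_add_mul_pos_of_not_isDiag {A : Matrix (Fin 2) (Fin 2) ℝ} (hA : ∀ i j, 0 ≤ A i j)
    (hdet : 0 < A.det) (hnd : ¬ A.IsDiag) : 0 < A 0 0 * A 0 1 + A 1 0 * A 1 1 := by
  rcases not_and_or.mp (mt isDiag_fin_two_iff.mpr hnd) with hb | hc
  · exact add_pos_of_pos_of_nonneg (mul_pos (diag_pos_of_det_pos hA hdet 0) ((hA 0 1).lt_of_ne' hb))
      (mul_nonneg (hA 1 0) (hA 1 1))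
  · exact add_pos_of_nonneg_of_pos (mul_nonneg (hA 0 0) (hA 0 1))
      (mul_pos ((hA 1 0).lt_of_ne' hc) (diag_pos_of_det_pos hA hdet 1))

theorem det_add_div_mul_le_vecMul_mul_vecMul {A : Matrix (Fin 2) (Fin 2) ℝ}
    (hA : ∀ i j, 0 ≤ A i j) {u : Fin 2 → ℝ} (hu : ∀ i, 0 < u i) {C : ℝ} (hC : 0 < C)
    (hCu : ∀ i j, u i ≤ C * u j) :
    (A.det + (A 0 0 * A 0 1 + A 1 0 * A 1 1) / C) * (u 0 * u 1) ≤ (u ᵥ* A) 0 * (u ᵥ* A) 1 := by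
  have hoff : (A 0 0 * A 0 1 + A 1 0 * A 1 1) / C * (u 0 * u 1) ≤
      A 0 0 * A 0 1 * u 0 ^ 2 + A 1 0 * A 1 1 * u 1 ^ 2 := by
    rw [div_mul_eq_mul_div, div_le_iff₀ hC]
    have hab := mul_nonneg (mul_nonneg (hA 0 0) (hA 0 1)) (hu 0).le
    have hcd := mul_nonneg (mul_nonneg (hA 1 0) (hA 1 1)) (hu 1).le
    nlinarith [mul_le_mul_of_nonneg_left (hCu 1 0) hab, mul_le_mul_of_nonneg_left (hCu 0 1) hcd]
  simp only [vecMul, dotProduct, Fin.sum_univ_two, det_fin_two]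
  nlinarith [mul_nonneg (mul_nonneg (hA 0 1) (hA 1 0)) (mul_pos (hu 0) (hu 1)).le]

theorem nv_mulVec_sub_nv_mulVec {P : Matrix (Fin 2) (Fin 2) ℝ} {V W : Fin 2 → ℝ}
    (hV : (1 ᵥ* P) ⬝ᵥ V ≠ 0) (hW : (1 ᵥ* P) ⬝ᵥ W ≠ 0) :
    nv (P *ᵥ V) - nv (P *ᵥ W) =
      P.det * (V 0 * W 1 - V 1 * W 0) / ((1 ᵥ* P) ⬝ᵥ V * ((1 ᵥ* P) ⬝ᵥ W)) := by
  simp only [dotProduct, Fin.sum_univ_two, one_vecMul_fin_two] at hV hW ⊢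
  simp only [nv, mulVec, dotProduct, Fin.sum_univ_two, det_fin_two]
  rw [div_sub_div _ _ (by convert hV using 1; ring) (by convert hW using 1; ring)]
  congr 1 <;> ring

noncomputable def colSumsDivDet (P : Matrix (Fin 2) (Fin 2) ℝ) : ℝ :=
  (1 ᵥ* P) 0 * (1 ᵥ* P) 1 / |P.det|

theorem colAllowable_one : ColAllowable 1 := by
  refine ⟨fun i j => ?_, ?_, ?_⟩ <;> simp [one_apply, apply_ite]

namespace ColAllowable

variable {P A : Matrix (Fin 2) (Fin 2) ℝ}

theorem one_vecMul_pos (hP : ColAllowable P) (j : Fin 2) : 0 < (1 ᵥ* P) j := by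
  fin_cases j
  exacts [by simpa using hP.2.1, by simpa using hP.2.2]

theorem of_one_vecMul_pos (hP : ∀ i j, 0 ≤ P i j) (hpos : ∀ j, 0 < (1 ᵥ* P) j) :
    ColAllowable P :=
  ⟨hP, by simpa using hpos 0, by simpa using hpos 1⟩

theorem vecMul_pos (hA : ColAllowable A) {u : Fin 2 → ℝ} (hu : ∀ i, 0 < u i) (j : Fin 2) :
    0 < (u ᵥ* A) j := by
  have hsum := hA.one_vecMul_pos j
  rw [one_vecMul_fin_two] at hsum
  simp only [vecMul, dotProduct, Fin.sum_univ_two]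
  obtain h | h : 0 < A 0 j ∨ 0 < A 1 j := by
    by_contra! h
    linarith
  · exact add_pos_of_pos_of_nonneg (mul_pos (hu 0) h) (mul_nonneg (hu 1).le (hA.1 1 j))
  · exact add_pos_of_nonneg_of_pos (mul_nonneg (hu 0).le (hA.1 0 j)) (mul_pos (hu 1) h)

theorem mul (hP : ColAllowable P) (hA : ColAllowable A) : ColAllowable (P * A) := by
  refine of_one_vecMul_pos (fun i j => ?_) fun j => ?_
  · rw [mul_apply]
    exact Finset.sum_nonneg fun k _ => mul_nonneg (hP.1 i k) (hA.1 k j)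
  · rw [← vecMul_vecMul]
    exact hA.vecMul_pos hP.one_vecMul_pos j

theorem one_vecMul_dotProduct_pos (hP : ColAllowable P)
    {V : Fin 2 → ℝ} (hV : ∀ i, 0 < V i) : 0 < (1 ᵥ* P) ⬝ᵥ V := by
  have := hP.one_vecMul_pos 0; have := hP.one_vecMul_pos 1; have := hV 0; have := hV 1
  simp only [dotProduct, Fin.sum_univ_two]
  positivity

theorem abs_nv_mulVec_sub_mul_le (hP : ColAllowable P) {V W : Fin 2 → ℝ}
    (hV : ∀ i, 0 < V i) (hW : ∀ i, 0 < W i) :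
    |nv (P *ᵥ V) - nv (P *ᵥ W)| * (min (V 0) (V 1) * min (W 0) (W 1)) *
        ((1 ᵥ* P) 0 + (1 ᵥ* P) 1) ^ 2 ≤ |P.det| * |V 0 * W 1 - V 1 * W 0| := by
  have hu := hP.one_vecMul_pos
  have hlower : ∀ X : Fin 2 → ℝ, (∀ i, 0 < X i) →
      min (X 0) (X 1) * ((1 ᵥ* P) 0 + (1 ᵥ* P) 1) ≤ (1 ᵥ* P) ⬝ᵥ X := by
    intro X hX
    simp only [dotProduct, Fin.sum_univ_two]
    nlinarith [min_le_left (X 0) (X 1), min_le_right (X 0) (X 1), hu 0, hu 1]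
  have hPV := hP.one_vecMul_dotProduct_pos hV
  have hPW := hP.one_vecMul_dotProduct_pos hW
  have hmW : 0 ≤ min (W 0) (W 1) * ((1 ᵥ* P) 0 + (1 ᵥ* P) 1) :=
    (mul_pos (lt_min (hW 0) (hW 1)) (add_pos (hu 0) (hu 1))).le
  calc |nv (P *ᵥ V) - nv (P *ᵥ W)| * (min (V 0) (V 1) * min (W 0) (W 1)) *
        ((1 ᵥ* P) 0 + (1 ᵥ* P) 1) ^ 2
      = |P.det| * |V 0 * W 1 - V 1 * W 0| *
          (min (V 0) (V 1) * ((1 ᵥ* P) 0 + (1 ᵥ* P) 1) *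
            (min (W 0) (W 1) * ((1 ᵥ* P) 0 + (1 ᵥ* P) 1)) /
          ((1 ᵥ* P) ⬝ᵥ V * ((1 ᵥ* P) ⬝ᵥ W))) := by
        rw [nv_mulVec_sub_nv_mulVec hPV.ne' hPW.ne', abs_div, abs_mul,
          abs_of_pos (mul_pos hPV hPW)]
        ring
    _ ≤ |P.det| * |V 0 * W 1 - V 1 * W 0| * 1 := by
        gcongr
        exact (div_le_one (mul_pos hPV hPW)).mpr
          (mul_le_mul (hlower V hV) (hlower W hW) hmW hPV.le)
    _ = |P.det| * |V 0 * W 1 - V 1 * W 0| := mul_one _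

theorem pos_and_abs_det_pos_of_sq_le (hP : ColAllowable P) {C : ℝ}
    (h : ((1 ᵥ* P) 0 + (1 ᵥ* P) 1) ^ 2 ≤ C * |P.det|) : 0 < C ∧ 0 < |P.det| := by
  have hpos : 0 < C * |P.det| :=
    (pow_pos (add_pos (hP.one_vecMul_pos 0) (hP.one_vecMul_pos 1)) 2).trans_le h
  have hC := pos_of_mul_pos_left hpos (abs_nonneg _)
  exact ⟨hC, pos_of_mul_pos_right hpos hC.le⟩

theorem one_vecMul_le_mul_of_sq_le (hP : ColAllowable P) {C : ℝ}
    (h : ((1 ᵥ* P) 0 + (1 ᵥ* P) 1) ^ 2 ≤ C * |P.det|) (i j : Fin 2) :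
    (1 ᵥ* P) i ≤ C * (1 ᵥ* P) j := by
  have h0 := hP.one_vecMul_pos 0
  have h1 := hP.one_vecMul_pos 1
  have hdet := abs_det_le_one_vecMul_mul hP.1
  have hC := (hP.pos_and_abs_det_pos_of_sq_le h).1.le
  have key : ((1 ᵥ* P) 0 + (1 ᵥ* P) 1) ^ 2 ≤ C * ((1 ᵥ* P) 0 * (1 ᵥ* P) 1) :=
    h.trans (mul_le_mul_of_nonneg_left hdet hC)
  fin_cases i <;> fin_cases j <;> simp only [Fin.zero_eta, Fin.mk_one] <;> nlinarith

theorem colSumsDivDet_pos (hP : ColAllowable P) (hdet : P.det ≠ 0) : 0 < colSumsDivDet P :=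
  div_pos (mul_pos (hP.one_vecMul_pos 0) (hP.one_vecMul_pos 1)) (abs_pos.mpr hdet)

theorem colSumsDivDet_le (hP : ColAllowable P) {C : ℝ}
    (h : ((1 ᵥ* P) 0 + (1 ᵥ* P) 1) ^ 2 ≤ C * |P.det|) : colSumsDivDet P ≤ C := by
  rw [colSumsDivDet, div_le_iff₀ (hP.pos_and_abs_det_pos_of_sq_le h).2]
  nlinarith [hP.one_vecMul_pos 0, hP.one_vecMul_pos 1]

theorem le_colSumsDivDet_mul (hP : ColAllowable P) (hA : ∀ i j, 0 ≤ A i j) (hdetA : 0 < A.det)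
    {C : ℝ} (h : ((1 ᵥ* P) 0 + (1 ᵥ* P) 1) ^ 2 ≤ C * |P.det|) :
    (1 + (A 0 0 * A 0 1 + A 1 0 * A 1 1) / (C * A.det)) * colSumsDivDet P ≤
      colSumsDivDet (P * A) := by
  obtain ⟨hC, hdetP⟩ := hP.pos_and_abs_det_pos_of_sq_le h
  have hu := hP.one_vecMul_pos
  calc (1 + (A 0 0 * A 0 1 + A 1 0 * A 1 1) / (C * A.det)) * colSumsDivDet P
      = (A.det + (A 0 0 * A 0 1 + A 1 0 * A 1 1) / C) * ((1 ᵥ* P) 0 * (1 ᵥ* P) 1) /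
          (|P.det| * A.det) := by
        rw [colSumsDivDet]; field_simp
    _ ≤ ((1 ᵥ* P) ᵥ* A) 0 * ((1 ᵥ* P) ᵥ* A) 1 / (|P.det| * A.det) := by
        gcongr ?_ / _
        exact det_add_div_mul_le_vecMul_mul_vecMul hA hu hC (hP.one_vecMul_le_mul_of_sq_le h)
    _ = colSumsDivDet (P * A) := by
        rw [colSumsDivDet, det_mul, abs_mul, abs_of_pos hdetA, vecMul_vecMul]

end ColAllowable

theorem tendsto_nv_of_tendsto_Nv {α : Type*} {l : Filter α} {X : α → Fin 2 → ℝ} {L : Fin 2 → ℝ}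
    (h : Tendsto (fun n => Nv (X n)) l (nhds L)) : Tendsto (fun n => nv (X n)) l (nhds (L 0)) :=
  tendsto_pi_nhds.mp h 0

theorem apply_one_eq_of_tendsto_Nv {α : Type*} {l : Filter α} [l.NeBot] {X : α → Fin 2 → ℝ}
    {L : Fin 2 → ℝ} (h : Tendsto (fun n => Nv (X n)) l (nhds L)) : L 1 = 1 - L 0 :=
  have hclosed : IsClosed {v : Fin 2 → ℝ | v 1 = 1 - v 0} :=
    isClosed_eq (continuous_apply 1) (continuous_const.sub (continuous_apply 0))
  hclosed.mem_of_tendsto h (Eventually.of_forall fun n => by simp [Nv])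

section Products

variable {s : ℕ} {M : Fin s → Matrix (Fin 2) (Fin 2) ℝ} {ω : ℕ → Fin s}

theorem Pprod_succ (n : ℕ) : Pprod M ω (n + 1) = Pprod M ω n * M (ω n) := by
  simp [Pprod, List.range_succ]

theorem colAllowable_Pprod (hM : ∀ k, ColAllowable (M k)) (n : ℕ) :
    ColAllowable (Pprod M ω n) := by
  induction n with
  | zero => simpa [Pprod] using colAllowable_one
  | succ n ih => rw [Pprod_succ]; exact ih.mul (hM _)

variable {V W : Fin 2 → ℝ}

theorem eventually_det_pos_of_tendsto_nv_sub (hM : ∀ k, ColAllowable (M k))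
    (hV : ∀ i, 0 < V i) (hW : ∀ i, 0 < W i) {L : ℝ} (hL : L ≠ 0)
    (h : Tendsto (fun n => nv (Pprod M ω n *ᵥ V) - nv (Pprod M ω n *ᵥ W)) atTop (nhds L)) :
    ∀ᶠ n in atTop, 0 < (M (ω n)).det := by
  have hsign : ∀ᶠ n in atTop, 0 < L * (V 0 * W 1 - V 1 * W 0) * (Pprod M ω n).det := by
    filter_upwards [(h.const_mul L).eventually (lt_mem_nhds (mul_self_pos.mpr hL))] with n hn
    have hPV := (colAllowable_Pprod (ω := ω) hM n).one_vecMul_dotProduct_pos hV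
    have hPW := (colAllowable_Pprod (ω := ω) hM n).one_vecMul_dotProduct_pos hW
    rw [nv_mulVec_sub_nv_mulVec hPV.ne' hPW.ne', ← mul_div_assoc,
      div_pos_iff_of_pos_right (mul_pos hPV hPW)] at hn
    linarith
  filter_upwards [hsign, (tendsto_add_atTop_nat 1).eventually hsign] with n h₀ h₁
  rw [Pprod_succ, det_mul, ← mul_assoc] at h₁
  exact pos_of_mul_pos_right h₁ h₀.le

theorem exists_sq_le_mul_abs_det_of_tendsto_nv_sub (hM : ∀ k, ColAllowable (M k))
    (hV : ∀ i, 0 < V i) (hW : ∀ i, 0 < W i) {L : ℝ} (hL : L ≠ 0)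
    (h : Tendsto (fun n => nv (Pprod M ω n *ᵥ V) - nv (Pprod M ω n *ᵥ W)) atTop (nhds L)) :
    ∃ C, ∀ᶠ n in atTop,
      ((1 ᵥ* Pprod M ω n) 0 + (1 ᵥ* Pprod M ω n) 1) ^ 2 ≤ C * |(Pprod M ω n).det| := by
  have hm : 0 < min (V 0) (V 1) * min (W 0) (W 1) :=
    mul_pos (lt_min (hV 0) (hV 1)) (lt_min (hW 0) (hW 1))
  refine ⟨|V 0 * W 1 - V 1 * W 0| / (|L| / 2 * (min (V 0) (V 1) * min (W 0) (W 1))), ?_⟩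
  filter_upwards [h.abs.eventually (lt_mem_nhds (half_lt_self (abs_pos.mpr hL)))] with n hn
  have hbound := (colAllowable_Pprod (ω := ω) hM n).abs_nv_mulVec_sub_mul_le hV hW
  rw [div_mul_eq_mul_div, le_div_iff₀ (by positivity)]
  nlinarith [mul_le_mul_of_nonneg_right hn.le
    (mul_nonneg hm.le (sq_nonneg ((1 ᵥ* Pprod M ω n) 0 + (1 ᵥ* Pprod M ω n) 1)))]

theorem false_of_frequently_not_isDiag (hM : ∀ k, ColAllowable (M k))
    (hdet : ∀ᶠ n in atTop, 0 < (M (ω n)).det) {C : ℝ}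
    (hC : ∀ᶠ n in atTop,
      ((1 ᵥ* Pprod M ω n) 0 + (1 ᵥ* Pprod M ω n) 1) ^ 2 ≤ C * |(Pprod M ω n).det|)
    (hnd : ∃ᶠ n in atTop, ¬ (M (ω n)).IsDiag) : False := by
  obtain ⟨k, hk, hfreq⟩ := hnd.exists_frequently_eq (f := ω) (p := fun k => ¬ (M k).IsDiag)
  obtain ⟨n₀, hωn₀, hdetk⟩ := (hfreq.and_eventually hdet).exists
  rw [hωn₀] at hdetk
  have hP := colAllowable_Pprod (ω := ω) hM
  obtain ⟨n₁, hn₁⟩ := hC.exists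
  have hCpos : 0 < C := ((hP n₁).pos_and_abs_det_pos_of_sq_le hn₁).1
  have hoff := mul_add_mul_pos_of_not_isDiag (hM k).1 hdetk hk
  set θ : Matrix (Fin 2) (Fin 2) ℝ → ℝ :=
    fun A => 1 + (A 0 0 * A 0 1 + A 1 0 * A 1 1) / (C * A.det)
  refine not_eventually_le_of_frequently_mul_le (θ := fun n => θ (M (ω n)))
    (f := fun n => colSumsDivDet (Pprod M ω n)) (θ₀ := θ (M k))
    (lt_add_of_pos_right 1 (by positivity)) ?_ (hfreq.mono fun n hn => by rw [hn]) C
    (hC.mono fun n hn => (hP n).colSumsDivDet_le hn)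
  filter_upwards [hdet, hC] with n hdetn hCn
  have hA := (hM (ω n)).1
  have hq : 0 ≤ M (ω n) 0 0 * M (ω n) 0 1 + M (ω n) 1 0 * M (ω n) 1 1 :=
    add_nonneg (mul_nonneg (hA 0 0) (hA 0 1)) (mul_nonneg (hA 1 0) (hA 1 1))
  refine ⟨(hP n).colSumsDivDet_pos (abs_pos.mp ((hP n).pos_and_abs_det_pos_of_sq_le hCn).2),
    le_add_of_nonneg_right (by positivity), ?_⟩
  rw [Pprod_succ]
  exact (hP n).le_colSumsDivDet_mul hA hdetn hCn

theorem false_of_eventually_isDiag (hM : ∀ k, ColAllowable (M k)) {i j : Fin 2}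
    (hdet : ∀ᶠ n in atTop, 0 < (M (ω n)).det) (hdiag : ∀ᶠ n in atTop, (M (ω n)).IsDiag)
    (horient : ∀ k, (M k).IsDiag → M k j j < M k i i) {C : ℝ}
    (hC : ∀ᶠ n in atTop, (1 ᵥ* Pprod M ω n) i ≤ C * (1 ᵥ* Pprod M ω n) j) : False := by
  obtain ⟨k, hk, hfreq⟩ :=
    hdiag.frequently.exists_frequently_eq (f := ω) (p := fun k => (M k).IsDiag)
  obtain ⟨n₀, hωn₀, hdetk⟩ := (hfreq.and_eventually hdet).exists
  rw [hωn₀] at hdetk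
  have hP := colAllowable_Pprod (ω := ω) hM
  refine not_eventually_le_of_frequently_mul_le (θ := fun n => M (ω n) i i / M (ω n) j j)
    (f := fun n => (1 ᵥ* Pprod M ω n) i / (1 ᵥ* Pprod M ω n) j) (θ₀ := M k i i / M k j j)
    ((one_lt_div (diag_pos_of_det_pos (hM k).1 hdetk j)).mpr (horient k hk)) ?_
    (hfreq.mono fun n hn => by rw [hn]) C ?_
  · filter_upwards [hdet, hdiag] with n hdetn hdiagn
    have hdj := diag_pos_of_det_pos (hM (ω n)).1 hdetn j
    refine ⟨div_pos ((hP n).one_vecMul_pos i) ((hP n).one_vecMul_pos j),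
      (one_le_div hdj).mpr (horient _ hdiagn).le, le_of_eq ?_⟩
    rw [Pprod_succ, ← vecMul_vecMul, vecMul_apply_of_isDiag hdiagn,
      vecMul_apply_of_isDiag hdiagn]
    ring
  · filter_upwards [hC] with n hn
    rwa [div_le_iff₀ ((hP n).one_vecMul_pos j)]

theorem tendsto_nv_sub_eq_zero (hM : ∀ k, ColAllowable (M k))
    (horient : (∀ k, (M k).IsDiag → M k 1 1 < M k 0 0) ∨ (∀ k, (M k).IsDiag → M k 0 0 < M k 1 1))
    (hV : ∀ i, 0 < V i) (hW : ∀ i, 0 < W i) {L : ℝ}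
    (h : Tendsto (fun n => nv (Pprod M ω n *ᵥ V) - nv (Pprod M ω n *ᵥ W)) atTop (nhds L)) :
    L = 0 := by
  by_contra hL
  have hdet := eventually_det_pos_of_tendsto_nv_sub hM hV hW hL h
  obtain ⟨C, hC⟩ := exists_sq_le_mul_abs_det_of_tendsto_nv_sub hM hV hW hL h
  by_cases hnd : ∃ᶠ n in atTop, ¬ (M (ω n)).IsDiag
  · exact false_of_frequently_not_isDiag hM hdet hC hnd
  have hdiag : ∀ᶠ n in atTop, (M (ω n)).IsDiag := by simpa [Filter.Frequently] using hnd
  have hCij : ∀ i j, ∀ᶠ n in atTop, (1 ᵥ* Pprod M ω n) i ≤ C * (1 ᵥ* Pprod M ω n) j :=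
    fun i j => hC.mono fun n hn => (colAllowable_Pprod hM n).one_vecMul_le_mul_of_sq_le hn i j
  rcases horient with h | h
  · exact false_of_eventually_isDiag hM hdet hdiag h (hCij 0 1)
  · exact false_of_eventually_isDiag hM hdet hdiag h (hCij 1 0)

end Products

theorem stmt14 (s : ℕ) (M : Fin s → Matrix (Fin 2) (Fin 2) ℝ)
    (hM : ∀ k, ColAllowable (M k))
    (hcases :
      -- Case 1
      ((∀ k, M k 1 0 = 0 → M k 1 1 ≤ M k 0 0) ∧
       (∀ k, M k 0 1 = 0 → M k 0 0 ≤ M k 1 1) ∧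
       (∀ k l, M k 1 1 = 0 → M l 0 0 = 0 →
         M l 0 1 * M k 1 0 ≤ M k 0 1 * M l 1 0) ∧
       (∀ k, ¬(M k 0 1 = 0 ∧ M k 1 0 = 0)) ∧
       (∀ k, ¬(M k 0 0 = 0 ∧ M k 1 1 = 0))) ∨
      -- Case 2
      ((∀ k, M k 1 0 = 0 → M k 0 0 < M k 1 1) ∧
       (∀ k, M k 0 1 = 0 → M k 1 1 < M k 0 0) ∧
       (∀ k l, M k 1 1 = 0 → M l 0 0 = 0 →
         M k 0 1 * M l 1 0 < M l 0 1 * M k 1 0)) ∨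
      -- Case 3
      ((∀ k, M k 1 0 = 0 → M k 1 1 ≤ M k 0 0) ∧
       (∀ k, M k 0 1 = 0 → M k 1 1 < M k 0 0) ∧
       (∀ k, M k 0 0 ≠ 0)) ∨
      -- Case 4
      ((∀ k, M k 1 0 = 0 → M k 0 0 < M k 1 1) ∧
       (∀ k, M k 0 1 = 0 → M k 0 0 ≤ M k 1 1) ∧
       (∀ k, M k 1 1 ≠ 0))) :
    ∀ V W : Fin 2 → ℝ, 0 < V 0 → 0 < V 1 → 0 < W 0 → 0 < W 1 →
      ∀ ω : ℕ → Fin s, ∀ LV LW : Fin 2 → ℝ,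
        Tendsto (fun n => Nv ((Pprod M ω n).mulVec V)) atTop (nhds LV) →
        Tendsto (fun n => Nv ((Pprod M ω n).mulVec W)) atTop (nhds LW) →
        LV = LW := by
  intro V W hV0 hV1 hW0 hW1 ω LV LW hTV hTW
  have horient :
      (∀ k, (M k).IsDiag → M k 1 1 < M k 0 0) ∨ (∀ k, (M k).IsDiag → M k 0 0 < M k 1 1) := by
    -- In Cases 1 and 2 no factor is diagonal.
    rcases hcases with ⟨-, -, -, hnd, -⟩ | ⟨h₁, h₂, -⟩ | ⟨-, h₂, -⟩ | ⟨h₁, -, -⟩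
    · exact Or.inl fun k hk => (hnd k (isDiag_fin_two_iff.mp hk)).elim
    · exact Or.inl fun k hk => ((h₁ k (hk one_ne_zero)).trans (h₂ k (hk zero_ne_one))).false.elim
    · exact Or.inl fun k hk => h₂ k (hk zero_ne_one)
    · exact Or.inr fun k hk => h₁ k (hk one_ne_zero)
  have h₀ : LV 0 = LW 0 := sub_eq_zero.mp <|
    tendsto_nv_sub_eq_zero hM horient (Fin.forall_fin_two.mpr ⟨hV0, hV1⟩)
      (Fin.forall_fin_two.mpr ⟨hW0, hW1⟩)
      ((tendsto_nv_of_tendsto_Nv hTV).sub (tendsto_nv_of_tendsto_Nv hTW))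
  ext i
  fin_cases i
  · exact h₀
  · simp only [Fin.mk_one, apply_one_eq_of_tendsto_Nv hTV, apply_one_eq_of_tendsto_Nv hTW, h₀]
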